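/- arXiv:1411.0706 — 2 statements merged into one kernel-verified Lean document; each statement's English description precedes it below -/
import Mathlib

section
/- Let q be prime and t ≥ 1, and let n = q^t + 1. The multinomial coefficient (q^t+1)!/(((q^{t-1})!)^q · 1!) associated to the partition of n into q copies of q^{t-1} together with one part equal to 1 is divisible by q but not by q². -/
/-!
The quotient is `(q^t + 1) · M`, where `M = (q m)! / (m!)^q` with `m = q^(t-1)`. The factor
`q^t + 1` is prime to `q`, and by Legendre's formula the `q`-adic valuation of `M` is the
base-`q` digit sum of `m`, which is `1` for a power of `q`.
-/

open Nat Finset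

theorem Nat.digits_sum_base_pow {b : ℕ} (hb : 1 < b) (k : ℕ) : (b.digits (b ^ k)).sum = 1 := by
  simpa [digits_of_lt b 1 one_ne_zero hb] using
    congrArg List.sum (digits_base_pow_mul hb (k := k) one_pos)

theorem factorial_pow_mul_multinomial_replicate (p m : ℕ) :
    (m !) ^ p * multinomial (range p) (fun _ => m) = (p * m)! := by
  simpa [prod_const, sum_const, card_range] using multinomial_spec (range p) fun _ => m

theorem factorial_mul_add_one_div_eq_mul_multinomial (p m : ℕ) :
    (p * m + 1)! / ((m !) ^ p * 1 !) = (p * m + 1) * multinomial (range p) fun _ => m := by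
  rw [factorial_one, mul_one, factorial_succ, ← factorial_pow_mul_multinomial_replicate,
    mul_left_comm, Nat.mul_div_cancel_left _ (by positivity)]

section
variable {p : ℕ} [Fact p.Prime]

/-- Legendre gives `v_p((p m)!) = v_p(m!) + m` and `(p - 1) v_p(m!) = m - s_p(m)`. -/
theorem padicValNat_multinomial_replicate (m : ℕ) :
    padicValNat p (multinomial (range p) fun _ => m) = (p.digits m).sum := by
  have hval : p * padicValNat p m ! + padicValNat p (multinomial (range p) fun _ => m) =
      padicValNat p m ! + m := by
    rw [← padicValNat_factorial_mul, ← factorial_pow_mul_multinomial_replicate,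
      padicValNat.mul (by positivity) (multinomial_pos _ _).ne', padicValNat.pow]
  have hlegendre := sub_one_mul_padicValNat_factorial (p := p) m
  have hsum := digit_sum_le p m
  have hle : padicValNat p m ! ≤ p * padicValNat p m ! :=
    Nat.le_mul_of_pos_left _ (Fact.out : p.Prime).pos
  rw [Nat.sub_one_mul] at hlegendre
  omega

theorem dvd_and_not_sq_dvd_of_padicValNat_eq_one {n : ℕ} (hn : n ≠ 0)
    (h : padicValNat p n = 1) : p ∣ n ∧ ¬ p ^ 2 ∣ n := by
  refine ⟨?_, ?_⟩
  · simpa using (padicValNat_dvd_iff_le (p := p) (n := 1) hn).2 h.ge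
  · rw [padicValNat_dvd_iff_le hn, h]
    omega

end

theorem prime_pow_succ_special_partition (q t : ℕ) (hq : q.Prime) (ht : 1 ≤ t) :
    q ∣ (q ^ t + 1).factorial / (((q ^ (t - 1)).factorial) ^ q * Nat.factorial 1) ∧
      ¬ q ^ 2 ∣ (q ^ t + 1).factorial / (((q ^ (t - 1)).factorial) ^ q * Nat.factorial 1) := by
  have : Fact q.Prime := ⟨hq⟩
  obtain ⟨s, rfl⟩ := Nat.exists_eq_add_of_le' ht
  have hquot := factorial_mul_add_one_div_eq_mul_multinomial q (q ^ s)
  rw [← pow_succ'] at hquot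
  rw [add_tsub_cancel_right, hquot]
  have hcoprime : ¬ q ∣ q ^ (s + 1) + 1 := fun h =>
    hq.one_lt.ne' (Nat.dvd_one.1 ((Nat.dvd_add_right (dvd_pow_self q s.succ_ne_zero)).1 h))
  apply dvd_and_not_sq_dvd_of_padicValNat_eq_one
    (Nat.mul_ne_zero (succ_ne_zero _) (multinomial_pos _ _).ne')
  rw [padicValNat.mul (succ_ne_zero _) (multinomial_pos _ _).ne',
    padicValNat.eq_zero_of_not_dvd hcoprime, padicValNat_multinomial_replicate,
    digits_sum_base_pow hq.one_lt, zero_add]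
end

section
/- Let n = q^t + 1 for a prime q and t ≥ 1, and suppose n is not a prime power. Then the greatest common divisor, over all partitions σ of n with every part at most n - 2, of the multinomial coefficients n!/∏σ_i! equals q. -/
/-!
Write `n = q ^ t + 1`. An admissible multinomial coefficient is divisible by `C(n, a)` for each
of its parts `a`, and equals `n!` when all parts are `1`. By Pascal's rule
`C(q ^ t + 1, a) = C(q ^ t, a - 1) + C(q ^ t, a)`, and `q` divides `C(q ^ t, k)` for
`0 < k < q ^ t`, so `q` divides every admissible coefficient.

Conversely, two-part partitions give binomial coefficients, and Kummer's theorem exhibits enough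
of them: `C(n, q ^ (t - 1) + 1)` has `q`-adic valuation exactly `1`, and for a prime `p ≠ q`
with `p ≤ n`, `C(n, p ^ ⌊log_p n⌋)` is prime to `p`. This last choice is admissible because
`n` is not a power of `p` and `n - 1 = q ^ t` is not one either. Primes `p > n` divide no
coefficient at all.
-/

/-- The multinomial coefficient of a partition given as a multiset. -/
def multinom (n : ℕ) (σ : Multiset ℕ) : ℕ :=
  n.factorial / (σ.map Nat.factorial).prod

/-- σ is a partition of n: positive parts summing to n. -/
def IsPartition (n : ℕ) (σ : Multiset ℕ) : Prop :=
  (∀ x ∈ σ, 0 < x) ∧ σ.sum = n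

/-- `g` is the gcd of the multinomial coefficients over all partitions of `n`
with every part at most `n - 2`. -/
def IsGcdOfMultinomials (n g : ℕ) : Prop :=
  (∀ σ : Multiset ℕ, IsPartition n σ → (∀ x ∈ σ, x ≤ n - 2) → g ∣ multinom n σ) ∧
    ∀ d : ℕ, (∀ σ : Multiset ℕ, IsPartition n σ → (∀ x ∈ σ, x ≤ n - 2) → d ∣ multinom n σ) →
      d ∣ g

open Nat

namespace Multiset

theorem multinomial_mul_prod_factorial (σ : Multiset ℕ) :
    σ.multinomial * (σ.map (·!)).prod = σ.sum ! := by
  induction σ using Multiset.induction_on with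
  | empty => simp
  | cons a σ ih =>
    rw [multinomial_cons, map_cons, prod_cons, sum_cons, mul_mul_mul_comm, ih, mul_right_comm,
      add_comm a, add_choose_mul_factorial_mul_factorial]

theorem multinomial_eq_factorial_of_forall_le_one {σ : Multiset ℕ} (h : ∀ a ∈ σ, a ≤ 1) :
    σ.multinomial = σ.sum ! := by
  have hprod : (σ.map (·!)).prod = 1 :=
    prod_eq_one fun x hx => by
      obtain ⟨a, ha, rfl⟩ := mem_map.1 hx
      exact factorial_eq_one.2 (h a ha)
  simpa [hprod] using multinomial_mul_prod_factorial σ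

theorem choose_dvd_multinomial {σ : Multiset ℕ} {a : ℕ} (h : a ∈ σ) :
    σ.sum.choose a ∣ σ.multinomial := by
  rw [← cons_erase h, multinomial_cons, sum_cons]
  exact dvd_mul_right _ _

theorem multinomial_pair (a b : ℕ) : ({a, b} : Multiset ℕ).multinomial = (a + b).choose a := by
  simp [insert_eq_cons, multinomial_cons]

end Multiset

theorem multinom_eq_multinomial {n : ℕ} {σ : Multiset ℕ} (h : σ.sum = n) :
    multinom n σ = σ.multinomial := by
  subst h
  refine Nat.div_eq_of_eq_mul_left (Multiset.prod_pos fun _ hx => ?_)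
    σ.multinomial_mul_prod_factorial.symm
  obtain ⟨a, _, rfl⟩ := Multiset.mem_map.1 hx
  exact factorial_pos a

theorem dvd_choose_of_forall_dvd_multinom {n d k : ℕ}
    (hd : ∀ σ : Multiset ℕ, IsPartition n σ → (∀ x ∈ σ, x ≤ n - 2) → d ∣ multinom n σ)
    (hk : 2 ≤ k) (hkn : k + 2 ≤ n) : d ∣ n.choose k := by
  have hsum : ({k, n - k} : Multiset ℕ).sum = n := by
    rw [Multiset.insert_eq_cons, Multiset.sum_cons, Multiset.sum_singleton]
    omega
  have hparts : ∀ x ∈ ({k, n - k} : Multiset ℕ), 0 < x ∧ x ≤ n - 2 := by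
    simp only [Multiset.insert_eq_cons, Multiset.mem_cons, Multiset.mem_singleton]
    rintro x (rfl | rfl) <;> omega
  have := hd {k, n - k} ⟨fun x hx => (hparts x hx).1, hsum⟩ fun x hx => (hparts x hx).2
  rwa [multinom_eq_multinomial hsum, Multiset.multinomial_pair, add_tsub_cancel_of_le (by omega)]
    at this

theorem Nat.pow_add_one_lt_pow_succ {q s : ℕ} (hq : 2 ≤ q) (h : q ^ (s + 1) ≠ 2) :
    q ^ s + 1 < q ^ (s + 1) := by
  rcases s.eq_zero_or_pos with rfl | hs
  · simp only [zero_add, pow_one, pow_zero] at h ⊢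
    omega
  · have := Nat.mul_le_mul_left (q ^ s) hq
    have := one_lt_pow hs.ne' (by omega : 1 < q)
    rw [pow_succ]
    omega

theorem Nat.dvd_of_dvd_of_padicValNat_eq_one {d m q : ℕ} (hq : q.Prime) (hdm : d ∣ m)
    (hm : m ≠ 0) (hv : padicValNat q m = 1) (h : ∀ p, p.Prime → p ∣ d → p = q) : d ∣ q := by
  have := Fact.mk hq
  obtain ⟨k, rfl⟩ : ∃ k, d = q ^ k :=
    ⟨_, eq_prime_pow_of_unique_prime_dvd (ne_zero_of_dvd_ne_zero hm hdm) (h _ · ·)⟩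
  rw [padicValNat_dvd_iff_le hm, hv] at hdm
  simpa using pow_dvd_pow q hdm

namespace Nat.Prime

theorem dvd_choose_pow_add_one {p t k : ℕ} (hp : p.Prime) (hk : 2 ≤ k) (hkt : k < p ^ t) :
    p ∣ (p ^ t + 1).choose k := by
  obtain ⟨j, rfl⟩ : ∃ j, k = j + 1 := ⟨k - 1, by omega⟩
  rw [choose_succ_succ]
  exact dvd_add (hp.dvd_choose_pow (by omega) (by omega)) (hp.dvd_choose_pow (by omega) (by omega))

theorem dvd_multinomial_of_sum_eq_pow_add_one {p t : ℕ} (hp : p.Prime) (ht : t ≠ 0)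
    {σ : Multiset ℕ} (hσ : σ.sum = p ^ t + 1) (hlt : ∀ a ∈ σ, a < p ^ t) :
    p ∣ σ.multinomial := by
  by_cases h : ∀ a ∈ σ, a ≤ 1
  · rw [Multiset.multinomial_eq_factorial_of_forall_le_one h, hσ, hp.dvd_factorial]
    have := le_self_pow ht p
    omega
  · obtain ⟨a, ha, h2⟩ : ∃ a ∈ σ, 1 < a := by simpa using h
    exact (hσ ▸ hp.dvd_choose_pow_add_one h2 (hlt a ha)).trans
      (Multiset.choose_dvd_multinomial ha)

-- Kummer: adding `p ^ log p n` and `n - p ^ log p n` in base `p` produces no carry.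
theorem not_dvd_choose_pow_log {p n : ℕ} (hp : p.Prime) (hn : n ≠ 0) :
    ¬ p ∣ n.choose (p ^ log p n) := by
  have := Fact.mk hp
  have hle : p ^ log p n ≤ n := pow_log_le_self p hn
  rw [dvd_iff_padicValNat_ne_zero (choose_pos hle).ne', not_not,
    padicValNat_choose hle (lt_succ_self _), Finset.card_eq_zero, Finset.filter_eq_empty_iff]
  intro i hi
  obtain ⟨hi1, hi2⟩ := Finset.mem_Ico.1 hi
  rw [Nat.mod_eq_zero_of_dvd (pow_dvd_pow p (by omega)), zero_add, not_le]
  exact mod_lt _ (pow_pos hp.pos i)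

-- Kummer: adding `p ^ s + 1` and `p ^ (s + 1) - p ^ s` in base `p` carries only at position `s + 1`.
theorem padicValNat_choose_pow_succ_add_one {p s : ℕ} (hp : p.Prime)
    (hs : p ^ s + 1 < p ^ (s + 1)) :
    padicValNat p ((p ^ (s + 1) + 1).choose (p ^ s + 1)) = 1 := by
  have := Fact.mk hp
  have hb : log p (p ^ (s + 1) + 1) < s + 2 := by
    refine log_lt_of_lt_pow (by omega) ?_
    have := Nat.mul_le_mul_left (p ^ (s + 1)) hp.two_le
    rw [pow_succ p (s + 1)]
    omega
  rw [padicValNat_choose (by omega) hb, Finset.card_eq_one]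
  refine ⟨s + 1, Finset.ext fun i => ?_⟩
  simp only [Finset.mem_filter, Finset.mem_Ico, Finset.mem_singleton]
  constructor
  · rintro ⟨⟨hi1, hi2⟩, hcarry⟩
    by_contra hne
    obtain ⟨c, hc⟩ : p ^ i ∣ p ^ s := pow_dvd_pow p (by omega)
    have hlow : (p ^ s + 1) % p ^ i = 1 := by
      rw [hc, Nat.mul_add_mod, Nat.mod_eq_of_lt (one_lt_pow (by omega) hp.one_lt)]
    have hhigh : (p ^ (s + 1) + 1 - (p ^ s + 1)) % p ^ i = 0 := by
      rw [Nat.add_sub_add_right]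
      exact Nat.mod_eq_zero_of_dvd
        (Nat.dvd_sub (pow_dvd_pow p (by omega)) (pow_dvd_pow p (by omega)))
    rw [hlow, hhigh] at hcarry
    have := one_lt_pow (n := i) (by omega) hp.one_lt
    omega
  · rintro rfl
    have := pow_pos hp.pos s
    refine ⟨by omega, ?_⟩
    rw [Nat.mod_eq_of_lt hs, Nat.mod_eq_of_lt (by omega)]
    omega

theorem exists_pow_eq_of_forall_dvd_choose {n d p : ℕ} (hp : p.Prime) (hn : 4 ≤ n)
    (hd : ∀ k, 2 ≤ k → k + 2 ≤ n → d ∣ n.choose k) (hpd : p ∣ d) :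
    ∃ j ≠ 0, p ^ j = n ∨ p ^ j + 1 = n := by
  by_contra! hne
  rcases lt_or_ge n p with hnp | hpn
  · have hchoose : n.choose 2 ∣ n ! :=
      ⟨2 ! * (n - 2)!, by rw [← mul_assoc, choose_mul_factorial_mul_factorial (by omega)]⟩
    have := hp.dvd_factorial.1 (hpd.trans ((hd 2 le_rfl hn).trans hchoose))
    omega
  · have hj : log p n ≠ 0 := (Nat.log_pos hp.one_lt hpn).ne'
    have hle : p ^ log p n ≤ n := pow_log_le_self p (by omega)
    have h2 : 2 ≤ p ^ log p n := hp.two_le.trans (le_self_pow hj p)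
    exact hp.not_dvd_choose_pow_log (by omega)
      (hpd.trans (hd _ h2 (by have := hne _ hj; omega)))

end Nat.Prime

theorem gcd_multinomials_prime_pow_succ (q t : ℕ) (hq : q.Prime) (ht : 1 ≤ t)
    (h1 : ¬ IsPrimePow (q ^ t + 1)) :
    IsGcdOfMultinomials (q ^ t + 1) q := by
  obtain ⟨s, rfl⟩ : ∃ s, t = s + 1 := ⟨t - 1, by omega⟩
  have hs : q ^ s + 1 < q ^ (s + 1) :=
    pow_add_one_lt_pow_succ hq.two_le fun h2 => h1 (h2 ▸ prime_three.isPrimePow)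
  refine ⟨fun σ hσ hle => ?_, fun d hd => ?_⟩
  · rw [multinom_eq_multinomial hσ.2]
    exact hq.dvd_multinomial_of_sum_eq_pow_add_one s.add_one_ne_zero hσ.2
      fun a ha => by have := hle a ha; omega
  have hchoose (k : ℕ) : 2 ≤ k → k + 2 ≤ q ^ (s + 1) + 1 → d ∣ (q ^ (s + 1) + 1).choose k :=
    dvd_choose_of_forall_dvd_multinom hd
  have := pow_pos hq.pos s
  refine dvd_of_dvd_of_padicValNat_eq_one hq (hchoose (q ^ s + 1) (by omega) (by omega))
    (choose_pos (by omega)).ne' (hq.padicValNat_choose_pow_succ_add_one hs) fun p hp hpd => ?_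
  obtain ⟨j, hj, hpow | hpow⟩ := hp.exists_pow_eq_of_forall_dvd_choose (by omega) hchoose hpd
  · exact absurd ⟨p, j, hp.prime, Nat.pos_of_ne_zero hj, hpow⟩ h1
  · exact (hp.pow_inj' hq hj s.add_one_ne_zero (by omega)).1
end
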